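/- Let (L, ρ, τ) be a probabilistic metric space and let A, B be nonempty subsets of L. Then F_{AB} = F_{BA} and F_{AB} = F_{cl(A) cl(B)}, where cl denotes closure in the strong topology of L. -/

import Mathlib

/-- The modified Lévy distance between two functions `F G : ℝ → ℝ`:
the infimum of all `h > 0` such that for every `x ∈ (-1/h, 1/h)` the inequalities
`F (x - h) - h ≤ G x ≤ F (x + h) + h` and `G (x - h) - h ≤ F x ≤ G (x + h) + h` hold. -/
noncomputable def dL (F G : ℝ → ℝ) : ℝ :=
  sInf {h : ℝ | 0 < h ∧ ∀ x ∈ Set.Ioo (-h⁻¹) h⁻¹,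
    (F (x - h) - h ≤ G x ∧ G x ≤ F (x + h) + h) ∧
    (G (x - h) - h ≤ F x ∧ F x ≤ G (x + h) + h)}

/-- A distance distribution function: a nondecreasing, left-continuous function
`F : ℝ → [0,1]` with `F x = 0` for all `x ≤ 0`.  `Δ⁺` is the set of all such functions. -/
def IsDDF (F : ℝ → ℝ) : Prop :=
  Monotone F ∧ (∀ x : ℝ, ContinuousWithinAt F (Set.Iio x) x) ∧
    (∀ x : ℝ, F x ≤ 1) ∧ (∀ x : ℝ, x ≤ 0 → F x = 0)

/-- The distance distribution function `ε₀`. -/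
noncomputable def eps0 : ℝ → ℝ := fun x => if x ≤ 0 then 0 else 1

/-- A triangle function `τ` on `Δ⁺`: commutative, associative, nondecreasing in each
argument, continuous (sequentially, with respect to the modified Lévy metric `dL`,
which metrizes the topology of weak convergence), with identity `ε₀`. -/
structure IsTriangleFn (τ : (ℝ → ℝ) → (ℝ → ℝ) → (ℝ → ℝ)) : Prop where
  isDDF : ∀ F G, IsDDF F → IsDDF G → IsDDF (τ F G)
  comm : ∀ F G, IsDDF F → IsDDF G → τ F G = τ G F
  assoc : ∀ F G K, IsDDF F → IsDDF G → IsDDF K → τ (τ F G) K = τ F (τ G K)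
  mono : ∀ F₁ F₂ G₁ G₂, IsDDF F₁ → IsDDF F₂ → IsDDF G₁ → IsDDF G₂ →
    F₁ ≤ F₂ → G₁ ≤ G₂ → τ F₁ G₁ ≤ τ F₂ G₂
  ident : ∀ F, IsDDF F → τ F eps0 = F
  continuous : ∀ (Fn Gn : ℕ → ℝ → ℝ) (F G : ℝ → ℝ),
    (∀ n, IsDDF (Fn n)) → (∀ n, IsDDF (Gn n)) → IsDDF F → IsDDF G →
    Filter.Tendsto (fun n => dL (Fn n) F) Filter.atTop (nhds 0) →
    Filter.Tendsto (fun n => dL (Gn n) G) Filter.atTop (nhds 0) →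
    Filter.Tendsto (fun n => dL (τ (Fn n) (Gn n)) (τ F G)) Filter.atTop (nhds 0)

/-- A probabilistic metric space `(L, ρ, τ)`. -/
structure IsPMSpace {L : Type*} (ρ : L → L → ℝ → ℝ)
    (τ : (ℝ → ℝ) → (ℝ → ℝ) → (ℝ → ℝ)) : Prop where
  isDDF : ∀ p q, IsDDF (ρ p q)
  triangleFn : IsTriangleFn τ
  refl : ∀ p, ρ p p = eps0
  eq_of : ∀ p q, ρ p q = eps0 → p = q
  symm : ∀ p q, ρ p q = ρ q p
  tri_ineq : ∀ p q r, τ (ρ p q) (ρ q r) ≤ ρ p r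

/-- `τ` is sup-continuous: `τ (sup_i F_i) G = sup_i τ (F_i) G` pointwise, for every
(nonempty) family `{F_i} ⊆ Δ⁺` and every `G ∈ Δ⁺`. -/
def SupContinuous (τ : (ℝ → ℝ) → (ℝ → ℝ) → (ℝ → ℝ)) : Prop :=
  ∀ (ι : Type) [Nonempty ι] (Fi : ι → ℝ → ℝ) (G : ℝ → ℝ),
    (∀ i, IsDDF (Fi i)) → IsDDF G →
    ∀ x : ℝ, τ (fun y => ⨆ i, Fi i y) G x = ⨆ i, τ (Fi i) G x

/-- Condition (W): for all `F, G ∈ Δ⁺`, `x > 0` and real `α, β`,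
`F x > α` and `G x > β` imply `τ F G x > max (α + β - 1) 0`. -/
def CondW (τ : (ℝ → ℝ) → (ℝ → ℝ) → (ℝ → ℝ)) : Prop :=
  ∀ F G, IsDDF F → IsDDF G → ∀ x : ℝ, 0 < x → ∀ α β : ℝ,
    α < F x → β < G x → max (α + β - 1) 0 < τ F G x

/-- Convergence of a sequence in the strong topology of the PM space:
for every `t > 0`, eventually `F_{p_n p}(t) > 1 - t`. -/
def SConvSeq {L : Type*} (ρ : L → L → ℝ → ℝ) (pn : ℕ → L) (p : L) : Prop :=
  ∀ t : ℝ, 0 < t → ∃ n₀ : ℕ, ∀ n ≥ n₀, 1 - t < ρ (pn n) p t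

/-- Cauchy sequence in a PM space. -/
def SCauchySeq {L : Type*} (ρ : L → L → ℝ → ℝ) (pn : ℕ → L) : Prop :=
  ∀ t : ℝ, 0 < t → ∃ n₀ : ℕ, ∀ m ≥ n₀, ∀ n ≥ n₀, 1 - t < ρ (pn m) (pn n) t

/-- Completeness of a PM space: every Cauchy sequence converges in the strong topology. -/
def SComplete {L : Type*} (ρ : L → L → ℝ → ℝ) : Prop :=
  ∀ pn : ℕ → L, SCauchySeq ρ pn → ∃ p : L, SConvSeq ρ pn p

/-- The closure of a set in the strong topology of a PM space (the strong topology is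
metrizable, so the closure coincides with the sequential closure). -/
def SClosure {L : Type*} (ρ : L → L → ℝ → ℝ) (A : Set L) : Set L :=
  {q | ∃ pn : ℕ → L, (∀ n, pn n ∈ A) ∧ SConvSeq ρ pn q}

/-- A set closed in the strong topology of a PM space. -/
def SClosed {L : Type*} (ρ : L → L → ℝ → ℝ) (A : Set L) : Prop :=
  SClosure ρ A ⊆ A

/-- The probabilistic distance from a point to a set: `F_{pB}(x) = sup {F_{pq}(x) : q ∈ B}`. -/
noncomputable def probDistToSet {L : Type*} (ρ : L → L → ℝ → ℝ) (p : L) (B : Set L)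
    (x : ℝ) : ℝ :=
  sSup ((fun q => ρ p q x) '' B)

/-- `Γ*_{AB}(x) = inf {F_{pB}(x) : p ∈ A}`. -/
noncomputable def gammaStar {L : Type*} (ρ : L → L → ℝ → ℝ) (A B : Set L) (x : ℝ) : ℝ :=
  sInf ((fun p => probDistToSet ρ p B x) '' A)

/-- `F*_{AB}`, the left-continuous regularization of `Γ*_{AB}`:
`F*_{AB}(x) = sup_{x' < x} Γ*_{AB}(x')`. -/
noncomputable def fStar {L : Type*} (ρ : L → L → ℝ → ℝ) (A B : Set L) (x : ℝ) : ℝ :=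
  sSup (gammaStar ρ A B '' Set.Iio x)

/-- The probabilistic Pompeiu-Hausdorff distance:
`H(A,B)(x) = F_{AB}(x) = min (F*_{AB}(x)) (F*_{BA}(x))`. -/
noncomputable def probHaus {L : Type*} (ρ : L → L → ℝ → ℝ) (A B : Set L) (x : ℝ) : ℝ :=
  min (fStar ρ A B x) (fStar ρ B A x)

/-- Convergence of a sequence of sets with respect to the probabilistic
Pompeiu-Hausdorff metric `H`. -/
def HConv {L : Type*} (ρ : L → L → ℝ → ℝ) (An : ℕ → Set L) (A : Set L) : Prop :=
  ∀ t : ℝ, 0 < t → ∃ n₀ : ℕ, ∀ n ≥ n₀, 1 - t < probHaus ρ (An n) A t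

/-- Cauchy sequence of sets with respect to the probabilistic Pompeiu-Hausdorff metric `H`. -/
def HCauchy {L : Type*} (ρ : L → L → ℝ → ℝ) (An : ℕ → Set L) : Prop :=
  ∀ t : ℝ, 0 < t → ∃ n₀ : ℕ, ∀ m ≥ n₀, ∀ n ≥ n₀, 1 - t < probHaus ρ (An m) (An n) t

/-! If `pₙ → p` in the strong topology then `F_{pₙ p} → ε₀` weakly, so, as `τ(ε₀, K) = K`,
continuity of `τ` and the triangle inequality give `F_{p r}(x') - ε ≤ F_{pₙ r}(x)` and
`F_{pₙ r}(x') - ε ≤ F_{p r}(x)` for `x' < x` and large `n`. The second estimate is needed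
uniformly in `r`; it follows by applying continuity of `τ` to a single step function lying below
all the `F_{pₙ r}` concerned. Hence replacing `A` or `B` by its closure changes `Γ*_{AB}` only by
an arbitrarily small shift of the argument, which the left-continuous regularization `F*_{AB}`
absorbs. -/

open Filter Topology Set

lemma IsDDF.nonneg {F : ℝ → ℝ} (hF : IsDDF F) (x : ℝ) : 0 ≤ F x := by
  rcases le_or_gt x 0 with hx | hx
  · exact (hF.2.2.2 x hx).ge
  · simpa only [hF.2.2.2 0 le_rfl] using hF.1 hx.le

noncomputable def ddfStep (a c : ℝ) : ℝ → ℝ := fun y => if y ≤ a then 0 else c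

lemma isDDF_ddfStep {a c : ℝ} (ha : 0 ≤ a) (hc₀ : 0 ≤ c) (hc₁ : c ≤ 1) :
    IsDDF (ddfStep a c) := by
  refine ⟨fun y z hyz => ?_, fun x => ?_, fun y => ?_, fun y hy => if_pos (hy.trans ha)⟩
  · unfold ddfStep; split_ifs <;> linarith
  · refine continuousWithinAt_const.congr_of_eventuallyEq (f := fun _ => ddfStep a c x) ?_ rfl
    rcases le_or_gt x a with hx | hx
    · filter_upwards [self_mem_nhdsWithin] with y (hy : y < x)
      simp only [ddfStep, if_pos hx, if_pos (hy.le.trans hx)]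
    · filter_upwards [Ioo_mem_nhdsLT hx] with y hy
      simp only [ddfStep, if_neg (not_le.2 hx), if_neg (not_le.2 hy.1)]
  · unfold ddfStep; split_ifs <;> linarith

lemma isDDF_eps0 : IsDDF eps0 :=
  isDDF_ddfStep le_rfl zero_le_one le_rfl

lemma ddfStep_le {F : ℝ → ℝ} (hF : IsDDF F) {a c : ℝ} (hc : c ≤ F a) : ddfStep a c ≤ F :=
  fun y => by
    unfold ddfStep
    split_ifs with hy
    exacts [hF.nonneg y, hc.trans (hF.1 (not_le.1 hy).le)]

lemma dL_nonneg (F G : ℝ → ℝ) : 0 ≤ dL F G :=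
  Real.sInf_nonneg fun _ hs => hs.1.le

lemma dL_le_of_forall_lt {F G : ℝ → ℝ} {δ : ℝ} (hδ : 0 ≤ δ)
    (h : ∀ t, δ < t → ∀ x : ℝ, (F (x - t) - t ≤ G x ∧ G x ≤ F (x + t) + t) ∧
      (G (x - t) - t ≤ F x ∧ F x ≤ G (x + t) + t)) : dL F G ≤ δ :=
  le_of_forall_gt_imp_ge_of_dense fun t ht =>
    csInf_le ⟨0, fun _ hs => hs.1.le⟩ ⟨hδ.trans_lt ht, fun x _ => h t ht x⟩

lemma dL_self {F : ℝ → ℝ} (hF : Monotone F) : dL F F = 0 := by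
  refine le_antisymm (dL_le_of_forall_lt le_rfl fun t ht x => ?_) (dL_nonneg F F)
  have h₁ := hF (show x - t ≤ x by linarith)
  have h₂ := hF (show x ≤ x + t by linarith)
  exact ⟨⟨by linarith, by linarith⟩, by linarith, by linarith⟩

lemma dL_eps0_le {G : ℝ → ℝ} (hG : IsDDF G) {δ : ℝ} (hδ : 0 < δ) (h : 1 - δ < G δ) :
    dL G eps0 ≤ δ := by
  refine dL_le_of_forall_lt hδ.le fun t ht x => ?_
  have hG₀ := hG.nonneg
  have hG₁ := hG.2.2.1
  have hlarge : ∀ y, δ ≤ y → 1 - t < G y := fun y hy => by linarith [hG.1 hy]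
  simp only [eps0]
  refine ⟨⟨?_, ?_⟩, ?_, ?_⟩ <;> split_ifs with hx
  · linarith [hG.2.2.2 (x - t) (by linarith)]
  · linarith [hG₁ (x - t)]
  · linarith [hG₀ (x + t)]
  · linarith [hlarge (x + t) (by linarith)]
  · linarith [hG₀ x]
  · linarith [hlarge x (by linarith)]
  · linarith [hG.2.2.2 x (by linarith)]
  · linarith [hG₁ x]

lemma sub_le_of_dL_lt {F G : ℝ → ℝ} (hF : IsDDF F) (hG : IsDDF G) {t x : ℝ} (ht : dL F G < t)
    (hx : |x| < t⁻¹) : G (x - t) - t ≤ F x := by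
  have hone_mem : (1 : ℝ) ∈ {h : ℝ | 0 < h ∧ ∀ x ∈ Ioo (-h⁻¹) h⁻¹,
      (F (x - h) - h ≤ G x ∧ G x ≤ F (x + h) + h) ∧
      (G (x - h) - h ≤ F x ∧ F x ≤ G (x + h) + h)} := by
    refine ⟨one_pos, fun x _ => ⟨⟨?_, ?_⟩, ?_, ?_⟩⟩
    · linarith [hF.2.2.1 (x - 1), hG.nonneg x]
    · linarith [hG.2.2.1 x, hF.nonneg (x + 1)]
    · linarith [hG.2.2.1 (x - 1), hF.nonneg x]
    · linarith [hF.2.2.1 x, hG.nonneg (x + 1)]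
  obtain ⟨s, ⟨hs₀, hs⟩, hst⟩ := exists_lt_of_csInf_lt ⟨1, hone_mem⟩ ht
  have hxs : x ∈ Ioo (-s⁻¹) s⁻¹ := abs_lt.1 (hx.trans_le (inv_anti₀ hs₀ hst.le))
  linarith [(hs x hxs).2.1, hG.1 (show x - t ≤ x - s by linarith)]

lemma IsTriangleFn.eventually_sub_lt {τ : (ℝ → ℝ) → (ℝ → ℝ) → (ℝ → ℝ)} (hτ : IsTriangleFn τ)
    {G : ℕ → ℝ → ℝ} (hG : ∀ n, IsDDF (G n)) (hG_lim : Tendsto (fun n => dL (G n) eps0) atTop (𝓝 0))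
    {K : ℝ → ℝ} (hK : IsDDF K) {x' x ε : ℝ} (hx : x' < x) (hε : 0 < ε) :
    ∀ᶠ n in atTop, K x' - ε < τ (G n) K x := by
  have hlim : Tendsto (fun n => dL (τ (G n) K) K) atTop (𝓝 0) := by
    have := hτ.continuous G (fun _ => K) eps0 K hG (fun _ => hK) isDDF_eps0 hK hG_lim
      (by simp only [dL_self hK.1]; exact tendsto_const_nhds)
    rwa [hτ.comm eps0 K isDDF_eps0 hK, hτ.ident K hK] at this
  obtain ⟨h, hh₀, hhε, hhx, hxh⟩ : ∃ h : ℝ, 0 < h ∧ h < ε ∧ h ≤ x - x' ∧ |x| < h⁻¹ := by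
    have hsmall : ∀ᶠ h in 𝓝[>] (0 : ℝ), h < ε ∧ h ≤ x - x' :=
      ((eventually_lt_nhds hε).and (eventually_le_nhds (sub_pos.2 hx))).filter_mono
        nhdsWithin_le_nhds
    have hlarge : ∀ᶠ h in 𝓝[>] (0 : ℝ), |x| < h⁻¹ :=
      tendsto_inv_nhdsGT_zero.eventually_gt_atTop |x|
    obtain ⟨h, ⟨hhε, hhx⟩, hxh, hh₀⟩ := (hsmall.and (hlarge.and self_mem_nhdsWithin)).exists
    exact ⟨h, hh₀, hhε, hhx, hxh⟩
  filter_upwards [hlim.eventually_lt_const hh₀] with n hn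
  linarith [sub_le_of_dL_lt (hτ.isDDF _ _ (hG n) hK) hK hn hxh, hK.1 (show x' ≤ x - h by linarith)]

lemma sSup_image_Iio_le {f g : ℝ → ℝ} (hg : BddAbove (range g))
    (hfg : ∀ ⦃x' x⦄, x' < x → f x' ≤ g x) (x : ℝ) : sSup (f '' Iio x) ≤ sSup (g '' Iio x) := by
  refine csSup_le (nonempty_Iio.image f) ?_
  rintro _ ⟨x', hx' : x' < x, rfl⟩
  obtain ⟨m, hx'm, hmx⟩ := exists_between hx'
  exact (hfg hx'm).trans (le_csSup (hg.mono (image_subset_range _ _)) ⟨m, hmx, rfl⟩)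

section PMSpace

variable {L : Type*} {ρ : L → L → ℝ → ℝ} {τ : (ℝ → ℝ) → (ℝ → ℝ) → (ℝ → ℝ)}

lemma SConvSeq.tendsto_dL_eps0 (hPM : IsPMSpace ρ τ) {p : ℕ → L} {q : L} (h : SConvSeq ρ p q) :
    Tendsto (fun n => dL (ρ (p n) q) eps0) atTop (𝓝 0) := by
  refine tendsto_order.2 ⟨fun a ha => Eventually.of_forall fun n => ha.trans_le (dL_nonneg _ _),
    fun a ha => ?_⟩
  obtain ⟨N, hN⟩ := h (a / 2) (by positivity)
  exact eventually_atTop.2 ⟨N, fun n hn =>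
    (dL_eps0_le (hPM.isDDF _ _) (by positivity) (hN n hn)).trans_lt (by linarith)⟩

lemma IsPMSpace.exists_sub_lt_of_tendsto (hPM : IsPMSpace ρ τ) {u v w : ℕ → L}
    (huv : Tendsto (fun n => dL (ρ (u n) (v n)) eps0) atTop (𝓝 0)) {c x' x ε : ℝ}
    (hc : ∀ n, c ≤ ρ (v n) (w n) x') (hx : x' < x) (hε : 0 < ε) :
    ∃ n, c - ε < ρ (u n) (w n) x := by
  by_cases hc₀ : c ≤ 0
  · exact ⟨0, by linarith [(hPM.isDDF (u 0) (w 0)).nonneg x]⟩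
  have hx'₀ : 0 ≤ x' := by
    by_contra! h
    linarith [hc 0, (hPM.isDDF (v 0) (w 0)).2.2.2 x' h.le]
  have hstep := isDDF_ddfStep hx'₀ (by linarith) ((hc 0).trans ((hPM.isDDF _ _).2.2.1 x'))
  obtain ⟨m, hx'm, hmx⟩ := exists_between hx
  obtain ⟨n, hn⟩ := (hPM.triangleFn.eventually_sub_lt (fun n => hPM.isDDF (u n) (v n)) huv
    hstep hmx hε).exists
  have hm : ddfStep x' c m = c := if_neg (not_le.2 hx'm)
  refine ⟨n, calc c - ε = ddfStep x' c m - ε := by rw [hm]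
    _ < τ (ρ (u n) (v n)) (ddfStep x' c) x := hn
    _ ≤ τ (ρ (u n) (v n)) (ρ (v n) (w n)) x :=
      hPM.triangleFn.mono _ _ _ _ (hPM.isDDF _ _) (hPM.isDDF _ _) hstep (hPM.isDDF _ _) le_rfl
        (ddfStep_le (hPM.isDDF _ _) (hc n)) x
    _ ≤ ρ (u n) (w n) x := hPM.tri_ineq _ _ _ x⟩

lemma probDistToSet_bddAbove (hPM : IsPMSpace ρ τ) (p : L) (B : Set L) (x : ℝ) :
    BddAbove ((fun q => ρ p q x) '' B) :=
  ⟨1, by rintro _ ⟨q, -, rfl⟩; exact (hPM.isDDF p q).2.2.1 x⟩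

lemma le_probDistToSet (hPM : IsPMSpace ρ τ) {p q : L} {B : Set L} (hq : q ∈ B) (x : ℝ) :
    ρ p q x ≤ probDistToSet ρ p B x :=
  le_csSup (probDistToSet_bddAbove hPM p B x) ⟨q, hq, rfl⟩

lemma probDistToSet_le {p : L} {B : Set L} (hB : B.Nonempty) {x c : ℝ}
    (h : ∀ q ∈ B, ρ p q x ≤ c) : probDistToSet ρ p B x ≤ c :=
  csSup_le (hB.image _) (by rintro _ ⟨q, hq, rfl⟩; exact h q hq)

lemma probDistToSet_nonneg (hPM : IsPMSpace ρ τ) (p : L) {B : Set L} (hB : B.Nonempty) (x : ℝ) :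
    0 ≤ probDistToSet ρ p B x :=
  let ⟨_, hq⟩ := hB
  ((hPM.isDDF _ _).nonneg x).trans (le_probDistToSet hPM hq x)

lemma probDistToSet_mono (hPM : IsPMSpace ρ τ) (p : L) {B B' : Set L} (hB : B.Nonempty)
    (hBB' : B ⊆ B') (x : ℝ) : probDistToSet ρ p B x ≤ probDistToSet ρ p B' x :=
  probDistToSet_le hB fun _ hq => le_probDistToSet hPM (hBB' hq) x

lemma gammaStar_le (hPM : IsPMSpace ρ τ) {A B : Set L} (hB : B.Nonempty) {p : L} (hp : p ∈ A)
    (x : ℝ) : gammaStar ρ A B x ≤ probDistToSet ρ p B x :=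
  csInf_le ⟨0, by rintro _ ⟨r, -, rfl⟩; exact probDistToSet_nonneg hPM r hB x⟩ ⟨p, hp, rfl⟩

lemma le_gammaStar {A B : Set L} (hA : A.Nonempty) {x c : ℝ}
    (h : ∀ p ∈ A, c ≤ probDistToSet ρ p B x) : c ≤ gammaStar ρ A B x :=
  le_csInf (hA.image _) (by rintro _ ⟨p, hp, rfl⟩; exact h p hp)

lemma gammaStar_bddAbove (hPM : IsPMSpace ρ τ) {A B : Set L} (hA : A.Nonempty)
    (hB : B.Nonempty) : BddAbove (range (gammaStar ρ A B)) := by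
  obtain ⟨p, hp⟩ := hA
  exact ⟨1, forall_mem_range.2 fun x => (gammaStar_le hPM hB hp x).trans
    (probDistToSet_le hB fun q _ => (hPM.isDDF p q).2.2.1 x)⟩

lemma subset_SClosure (hPM : IsPMSpace ρ τ) (A : Set L) : A ⊆ SClosure ρ A := by
  intro p hp
  refine ⟨fun _ => p, fun _ => hp, fun t ht => ⟨0, fun _ _ => ?_⟩⟩
  rw [hPM.refl p, eps0, if_neg (not_le.2 ht)]
  linarith

lemma probDistToSet_SClosure_le (hPM : IsPMSpace ρ τ) {B : Set L} (hB : B.Nonempty) (p : L)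
    {x' x : ℝ} (hx : x' < x) :
    probDistToSet ρ p (SClosure ρ B) x' ≤ probDistToSet ρ p B x := by
  refine probDistToSet_le (hB.mono (subset_SClosure hPM B)) fun q ⟨qn, hqn, hlim⟩ =>
    le_of_forall_pos_lt_add fun ε hε => ?_
  obtain ⟨n, hn⟩ := hPM.exists_sub_lt_of_tendsto (v := fun _ => q) (w := fun _ => p)
    (hlim.tendsto_dL_eps0 hPM) (fun _ => le_rfl) hx hε
  rw [hPM.symm q, hPM.symm (qn n)] at hn
  linarith [le_probDistToSet hPM (p := p) (hqn n) x]

lemma gammaStar_le_probDistToSet_of_mem_SClosure (hPM : IsPMSpace ρ τ) {A B : Set L}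
    (hB : B.Nonempty) {p : L} (hp : p ∈ SClosure ρ A) {x' x : ℝ} (hx : x' < x) :
    gammaStar ρ A B x' ≤ probDistToSet ρ p B x := by
  obtain ⟨pn, hpn, hlim⟩ := hp
  refine le_of_forall_pos_lt_add fun ε hε => ?_
  have hnear : ∀ n, ∃ q ∈ B, gammaStar ρ A B x' - ε / 2 < ρ (pn n) q x' := fun n => by
    obtain ⟨_, ⟨q, hq, rfl⟩, hlt⟩ := exists_lt_of_lt_csSup (hB.image _)
      ((gammaStar_le hPM hB (hpn n) x').trans_lt' (sub_lt_self _ (half_pos hε)))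
    exact ⟨q, hq, hlt⟩
  choose qn hqn hlt using hnear
  have huv : Tendsto (fun n => dL (ρ p (pn n)) eps0) atTop (𝓝 0) := by
    simpa only [hPM.symm p] using hlim.tendsto_dL_eps0 hPM
  obtain ⟨n, hn⟩ := hPM.exists_sub_lt_of_tendsto (u := fun _ => p) huv (fun n => (hlt n).le) hx
    (half_pos hε)
  linarith [le_probDistToSet hPM (p := p) (hqn n) x]

lemma fStar_SClosure (hPM : IsPMSpace ρ τ) {A B : Set L} (hA : A.Nonempty) (hB : B.Nonempty) :
    fStar ρ (SClosure ρ A) (SClosure ρ B) = fStar ρ A B := by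
  have hA' := hA.mono (subset_SClosure hPM A)
  have hB' := hB.mono (subset_SClosure hPM B)
  funext x
  refine le_antisymm (sSup_image_Iio_le (gammaStar_bddAbove hPM hA hB) (fun x' x hx => ?_) x)
    (sSup_image_Iio_le (gammaStar_bddAbove hPM hA' hB') (fun x' x hx => ?_) x)
  · exact le_gammaStar hA fun p hp => (gammaStar_le hPM hB' (subset_SClosure hPM A hp) x').trans
      (probDistToSet_SClosure_le hPM hB p hx)
  · exact le_gammaStar hA' fun p hp =>
      (gammaStar_le_probDistToSet_of_mem_SClosure hPM hB hp hx).trans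
        (probDistToSet_mono hPM p hB (subset_SClosure hPM B) x)

end PMSpace

/-- For nonempty subsets `A, B` of a PM space, `F_{AB} = F_{BA}` and
`F_{AB} = F_{cl(A) cl(B)}`, where `cl` is the closure in the strong topology. -/
theorem probHaus_symm_and_closure {L : Type*} (ρ : L → L → ℝ → ℝ)
    (τ : (ℝ → ℝ) → (ℝ → ℝ) → (ℝ → ℝ)) (hPM : IsPMSpace ρ τ)
    (A B : Set L) (hA : A.Nonempty) (hB : B.Nonempty) :
    probHaus ρ A B = probHaus ρ B A ∧
    probHaus ρ A B = probHaus ρ (SClosure ρ A) (SClosure ρ B) := by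
  refine ⟨funext fun x => min_comm _ _, funext fun x => ?_⟩
  simp only [probHaus, fStar_SClosure hPM hA hB, fStar_SClosure hPM hB hA]
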